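/- Let n ≥ 1, j ≥ 1, and let s ∈ {0,…,n} with s > n/2. For every d ∈ {0,…,n}, the one-step kernels of the sequential (2j+1)-Majority and 2j-Majority processes satisfy P(X^{(2j+1)}_{t+1} ≥ d | X^{(2j+1)}_t = s) ≥ P(X^{(2j)}_{t+1} ≥ d | X^{(2j)}_t = s). -/

import Mathlib

open MeasureTheory Finset
open scoped ENNReal NNReal

noncomputable section

/-- Probability mass function of a binomial random variable `Bin(m, p)` at `k`. -/
def binomPMF (m k : ℕ) (p : ℝ) : ℝ := (m.choose k : ℝ) * p ^ k * (1 - p) ^ (m - k)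

/-- Tail probability `P(Bin(m, p) ≥ j)`. -/
def binomTail (m j : ℕ) (p : ℝ) : ℝ := ∑ k ∈ Finset.Icc j m, binomPMF m k p

/-- Cumulative distribution function `P(Bin(m, p) ≤ j)`. -/
def binomCDF (m j : ℕ) (p : ℝ) : ℝ := ∑ k ∈ Finset.range (j + 1), binomPMF m k p

/-- `majProb n j s` is the sample-majority probability `q_j(s)`: the probability that an
agent sampling `j` agents uniformly at random with replacement (when `s` of the `n` agents
hold opinion `a`) adopts opinion `a` under majority with uniform tie-breaking.
For odd `j = 2m+1` this is `P(Bin(2m+1, s/n) ≥ m+1)`; for even `j = 2m` it is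
`P(Bin(2m, s/n) ≥ m+1) + (1/2)·P(Bin(2m, s/n) = m)`. -/
def majProb (n j s : ℕ) : ℝ :=
  binomTail j (j / 2 + 1) ((s : ℝ) / n) +
    if Even j then (1 / 2) * binomPMF j (j / 2) ((s : ℝ) / n) else 0

/-- One-step transition kernel of the sequential `j`-Majority process on states `{0, …, n}`:
from state `s`, move to `s+1` with probability `((n-s)/n)·q_j(s)`, to `s-1` with probability
`(s/n)·(1-q_j(s))`, and stay at `s` otherwise. -/
def seqKernel (n j : ℕ) (s u : ℕ) : ℝ :=
  if u = s + 1 then (((n : ℝ) - s) / n) * majProb n j s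
  else if u + 1 = s then ((s : ℝ) / n) * (1 - majProb n j s)
  else if u = s then
    1 - (((n : ℝ) - s) / n) * majProb n j s - ((s : ℝ) / n) * (1 - majProb n j s)
  else 0

/-- One-step transition kernel of the gossip `j`-Majority process on states `{0, …, n}`:
from state `s`, the next state is distributed as `Bin(n, q_j(s))`. -/
def gossipKernel (n j : ℕ) (s u : ℕ) : ℝ := binomPMF n u (majProb n j s)

/-- `kernelTail K n s d` is the mass that the kernel `K` places, from state `s`,
on the set `{d, d+1, …, n}`, i.e. `P(X_{t+1} ≥ d | X_t = s)`. -/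
def kernelTail (K : ℕ → ℕ → ℝ) (n s d : ℕ) : ℝ := ∑ u ∈ Finset.Icc d n, K s u

/-- `IsMarkovChain μ K x X` states that, under the probability measure `μ`, the process
`X` is a Markov chain with one-step transition kernel `K` started at `x`: `X 0 = x`
almost surely, and conditionally on any finite path the next state is distributed
according to `K` applied to the current state. -/
def IsMarkovChain {Ω : Type*} [MeasurableSpace Ω] (μ : Measure Ω)
    (K : ℕ → ℕ → ℝ) (x : ℕ) (X : ℕ → Ω → ℕ) : Prop :=
  IsProbabilityMeasure μ ∧
  (∀ t, Measurable (X t)) ∧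
  μ {ω | X 0 ω = x} = 1 ∧
  ∀ (t : ℕ) (p : ℕ → ℕ) (u : ℕ),
    μ ({ω | X (t + 1) ω = u} ∩ {ω | ∀ i ≤ t, X i ω = p i}) =
      ENNReal.ofReal (K (p t) u) * μ {ω | ∀ i ≤ t, X i ω = p i}

/-- The convergence (hitting) time: the first time `t` with `X t ∈ {0, n}`
(`⊤` if the process never reaches a consensus state). -/
def hitTime {Ω : Type*} (n : ℕ) (X : ℕ → Ω → ℕ) (ω : Ω) : ℕ∞ :=
  ⨅ (t : ℕ) (_ : X t ω = 0 ∨ X t ω = n), (t : ℕ∞)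

/-!
Pascal's rule gives `q_{2j+1}(s) = q_{2j}(s) + (s/n - 1/2) · P(Bin(2j, s/n) = j)`, so the odd
sample majority dominates the even one as soon as `s > n/2`. From a fixed state `s`, the
tail `P(X_{t+1} ≥ d)` of the sequential kernel is, for each `d`, either constant or a
nondecreasing affine function of `q(s)`, so this comparison passes to the kernels.
-/

lemma binomPMF_nonneg (m k : ℕ) {p : ℝ} (h0 : 0 ≤ p) (h1 : p ≤ 1) :
    0 ≤ binomPMF m k p := by
  have : 0 ≤ 1 - p := by linarith
  unfold binomPMF
  positivity

lemma binomPMF_of_lt {m k : ℕ} (h : m < k) (p : ℝ) : binomPMF m k p = 0 := by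
  simp [binomPMF, Nat.choose_eq_zero_of_lt h]

lemma binomPMF_succ_succ (m k : ℕ) (p : ℝ) :
    binomPMF (m + 1) (k + 1) p = (1 - p) * binomPMF m (k + 1) p + p * binomPMF m k p := by
  obtain h | rfl | h := lt_trichotomy k m
  · obtain ⟨r, rfl⟩ := Nat.exists_eq_add_of_lt h
    simp only [binomPMF, Nat.choose_succ_succ', show k + r + 1 + 1 - (k + 1) = r + 1 by omega,
      show k + r + 1 - (k + 1) = r by omega, show k + r + 1 - k = r + 1 by omega]
    push_cast
    ring
  · rw [binomPMF_of_lt (Nat.lt_succ_self k)]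
    simp [binomPMF, pow_succ, mul_comm]
  · simp [binomPMF_of_lt, h, Nat.lt_succ_of_lt h]

lemma binomTail_eq_add {m k : ℕ} (h : k ≤ m) (p : ℝ) :
    binomTail m k p = binomPMF m k p + binomTail m (k + 1) p := by
  rw [binomTail, binomTail, Icc_eq_cons_Ioc h, sum_cons, Icc_add_one_left_eq_Ioc]

lemma binomTail_succ_succ {m k : ℕ} (h : k ≤ m) (p : ℝ) :
    binomTail (m + 1) (k + 1) p = binomTail m (k + 1) p + p * binomPMF m k p := by
  have shift (f : ℕ → ℝ) : ∑ i ∈ Icc (k + 1) (m + 1), f i = ∑ i ∈ Icc k m, f (i + 1) := by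
    rw [← map_add_right_Icc, sum_map]
    rfl
  have top : ∑ i ∈ Icc (k + 1) (m + 1), binomPMF m i p = binomTail m (k + 1) p := by
    rw [sum_Icc_succ_top (by omega), binomPMF_of_lt (Nat.lt_succ_self m), add_zero,
      binomTail]
  calc binomTail (m + 1) (k + 1) p
      = ∑ i ∈ Icc k m, ((1 - p) * binomPMF m (i + 1) p + p * binomPMF m i p) := by
        simp only [binomTail, shift, binomPMF_succ_succ]
    _ = (1 - p) * binomTail m (k + 1) p + p * binomTail m k p := by
        rw [sum_add_distrib, ← mul_sum, ← mul_sum, ← shift fun i ↦ binomPMF m i p, top]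
        rfl
    _ = binomTail m (k + 1) p + p * binomPMF m k p := by
        rw [binomTail_eq_add h]
        ring

lemma majProb_two_mul_add_one (n j s : ℕ) :
    majProb n (2 * j + 1) s
      = majProb n (2 * j) s + ((s : ℝ) / n - 1 / 2) * binomPMF (2 * j) j ((s : ℝ) / n) := by
  have hodd : ¬Even (2 * j + 1) := Nat.not_even_iff_odd.mpr (odd_two_mul_add_one j)
  simp only [majProb, if_pos (even_two_mul j), if_neg hodd,
    show (2 * j + 1) / 2 = j by omega, show 2 * j / 2 = j by omega,
    binomTail_succ_succ (show j ≤ 2 * j by omega)]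
  ring

lemma majProb_two_mul_le {n j s : ℕ} (hs : s ≤ n) (hs2 : n < 2 * s) :
    majProb n (2 * j) s ≤ majProb n (2 * j + 1) s := by
  have hn : (0 : ℝ) < n := by exact_mod_cast (show 0 < n by omega)
  have hp1 : (s : ℝ) / n ≤ 1 := (div_le_one hn).mpr (by exact_mod_cast hs)
  have hp2 : 1 / 2 ≤ (s : ℝ) / n := by
    rw [div_le_div_iff₀ two_pos hn, one_mul]
    exact_mod_cast (by omega : n ≤ s * 2)
  rw [majProb_two_mul_add_one]
  have := binomPMF_nonneg (2 * j) j (by positivity) hp1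
  nlinarith

lemma kernelTail_eq_add (K : ℕ → ℕ → ℝ) {n s d : ℕ} (hd : d ≤ n) :
    kernelTail K n s d = K s d + kernelTail K n s (d + 1) := by
  rw [kernelTail, kernelTail, Icc_eq_cons_Ioc hd, sum_cons, Icc_add_one_left_eq_Ioc]

section SeqKernel

variable {n j s d : ℕ}

lemma seqKernel_eq_zero {u : ℕ} (h₁ : u ≠ s + 1) (h₂ : u + 1 ≠ s) (h₃ : u ≠ s) :
    seqKernel n j s u = 0 := by
  simp [seqKernel, h₁, h₂, h₃]

lemma kernelTail_seqKernel_of_succ_lt (hd : s + 1 < d) : kernelTail (seqKernel n j) n s d = 0 :=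
  sum_eq_zero fun u hu ↦ by
    rw [mem_Icc] at hu
    exact seqKernel_eq_zero (by omega) (by omega) (by omega)

lemma kernelTail_seqKernel_succ (hs : s ≤ n) :
    kernelTail (seqKernel n j) n s (s + 1) = ((n : ℝ) - s) / n * majProb n j s := by
  obtain rfl | hs := hs.eq_or_lt
  · simp [kernelTail]
  · rw [kernelTail_eq_add _ hs, kernelTail_seqKernel_of_succ_lt (lt_add_one _)]
    simp [seqKernel]

lemma kernelTail_seqKernel_self (hs : s ≤ n) :
    kernelTail (seqKernel n j) n s s = 1 - (s : ℝ) / n * (1 - majProb n j s) := by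
  rw [kernelTail_eq_add _ hs, kernelTail_seqKernel_succ hs, seqKernel, if_neg (by omega),
    if_neg (by omega), if_pos rfl]
  ring

lemma kernelTail_seqKernel_of_lt (hs : s ≤ n) (hd : d < s) :
    kernelTail (seqKernel n j) n s d = 1 := by
  obtain ⟨r, rfl⟩ := Nat.exists_eq_add_of_lt hd
  have below : kernelTail (seqKernel n j) n (d + r + 1) d
      = kernelTail (seqKernel n j) n (d + r + 1) (d + r) := by
    refine (sum_subset (Icc_subset_Icc_left (Nat.le_add_right d r)) fun u hu hu' ↦ ?_).symm
    rw [mem_Icc] at hu hu'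
    exact seqKernel_eq_zero (by omega) (by omega) (by omega)
  rw [below, kernelTail_eq_add _ (by omega), kernelTail_seqKernel_self hs, seqKernel,
    if_neg (by omega), if_pos rfl]
  ring

lemma kernelTail_seqKernel_mono {j' : ℕ} (hs : s ≤ n) (hq : majProb n j s ≤ majProb n j' s) :
    kernelTail (seqKernel n j) n s d ≤ kernelTail (seqKernel n j') n s d := by
  obtain hd | rfl | hd := lt_trichotomy d s
  · rw [kernelTail_seqKernel_of_lt hs hd, kernelTail_seqKernel_of_lt hs hd]
  · rw [kernelTail_seqKernel_self hs, kernelTail_seqKernel_self hs]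
    gcongr
  obtain rfl | hd := (Nat.succ_le_of_lt hd).eq_or_lt
  · have : 0 ≤ ((n : ℝ) - s) / n := div_nonneg (sub_nonneg.mpr (mod_cast hs)) n.cast_nonneg
    rw [kernelTail_seqKernel_succ hs, kernelTail_seqKernel_succ hs]
    gcongr
  · rw [kernelTail_seqKernel_of_succ_lt hd, kernelTail_seqKernel_of_succ_lt hd]

end SeqKernel

theorem stmt9_general (n j s d : ℕ) (hs : s ≤ n) (hs2 : n < 2 * s) :
    kernelTail (seqKernel n (2 * j)) n s d ≤ kernelTail (seqKernel n (2 * j + 1)) n s d :=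
  kernelTail_seqKernel_mono hs (majProb_two_mul_le hs hs2)

theorem stmt9 (n j s d : ℕ) (hn : 1 ≤ n) (hj : 1 ≤ j)
    (hs : s ≤ n) (hs2 : n < 2 * s) (hd : d ≤ n) :
    kernelTail (seqKernel n (2 * j)) n s d ≤ kernelTail (seqKernel n (2 * j + 1)) n s d :=
  stmt9_general n j s d hs hs2
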